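/- arXiv:1606.09138 — 5 statements merged into one kernel-verified Lean document; each statement's English description precedes it below -/
import Mathlib

section
/- For all rational numbers d, ξ₁, ξ₂, ξ₀₁, with ε₀ := (1/2)(d² − 4d + ξ₁), C := 6d − 4ξ₁ + ξ₂ − ξ₀₁, and T := (1/6)(44d − 12d² + d³ + (3d−24)ξ₁ + 4ξ₂ − 2ξ₀₁), the identity 3d − 2ξ₁ + ξ₀₁ = d(d−1)² + (4−3d)ε₀ + 3T − 2C holds; i.e., the class μ₂ of the surface equals d(d−1)² + (4−3d)ε₀ + 3T − 2C. -/
/-- The class μ₂ = 3d − 2ξ₁ + ξ₀₁ of the surface equals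
d(d−1)² + (4−3d)ε₀ + 3T − 2C. -/
theorem stmt_4 (d ξ₁ ξ₂ ξ₀₁ ε₀ C T : ℚ)
    (hε₀ : ε₀ = (1/2) * (d^2 - 4*d + ξ₁))
    (hC : C = 6*d - 4*ξ₁ + ξ₂ - ξ₀₁)
    (hT : T = (1/6) * (44*d - 12*d^2 + d^3 + (3*d - 24)*ξ₁ + 4*ξ₂ - 2*ξ₀₁)) :
    3*d - 2*ξ₁ + ξ₀₁ = d*(d - 1)^2 + (4 - 3*d)*ε₀ + 3*T - 2*C := by
  subst hε₀ hC hT; ring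
end

section
/- For all rational numbers d, ξ₁, ξ₂, ξ₃, ξ₀₁, ξ₁₁, ξ₀₀₁, with μ₀ := (1/2)(−5d + d² + ξ₁), t := (1/3)(35d − (15/2)d² + (1/2)d³ − ξ₀₁ − 15ξ₁ + (3/2)dξ₁ + 2ξ₂), γ := 10d − ξ₀₁ − 5ξ₁ + ξ₂, q := (1/4)(−295d + (355/6)d² − 5d³ + (1/6)d⁴ + 2ξ₀₀₁ + (25 − (4/3)d)ξ₀₁ + (200 − 25d + d²)ξ₁ + (1/2)ξ₁² − 7ξ₁₁ + (−55 + (8/3)d)ξ₂ + 6ξ₃), s_t := −120d + 10d² + 2ξ₀₀₁ + (20 − d)ξ₀₁ + (90 − 5d)ξ₁ − 6ξ₁₁ + (d − 30)ξ₂ + 4ξ₃, and χ_C := −60d + ξ₀₀₁ + 10ξ₀₁ + 55ξ₁ − 4ξ₁₁ − 20ξ₂ + 3ξ₃, the identity ξ₃ = 125d − 75d² + 15d³ − d⁴ + (150 − 45d + 4d² − 2μ₀)μ₀ + 4q − (1/2)s_t + (45 − 4d)t + (−10 + (1/2)d)γ − χ_C holds. -/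
/-- Table 4 (Theorem 4.1): the Chern number ξ₃ = ∫c₁(TM)³ expressed via the
seven characters d, μ₀, t, q, s_t, γ, χ_C. -/
theorem stmt_12 (d ξ₁ ξ₂ ξ₃ ξ₀₁ ξ₁₁ ξ₀₀₁ μ₀ t γ q s_t χ_C : ℚ)
    (hμ₀ : μ₀ = (1/2) * (-5*d + d^2 + ξ₁))
    (ht : t = (1/3) * (35*d - (15/2)*d^2 + (1/2)*d^3 - ξ₀₁ - 15*ξ₁
        + (3/2)*d*ξ₁ + 2*ξ₂))
    (hγ : γ = 10*d - ξ₀₁ - 5*ξ₁ + ξ₂)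
    (hq : q = (1/4) * (-295*d + (355/6)*d^2 - 5*d^3 + (1/6)*d^4 + 2*ξ₀₀₁
        + (25 - (4/3)*d)*ξ₀₁ + (200 - 25*d + d^2)*ξ₁ + (1/2)*ξ₁^2 - 7*ξ₁₁
        + (-55 + (8/3)*d)*ξ₂ + 6*ξ₃))
    (hst : s_t = -120*d + 10*d^2 + 2*ξ₀₀₁ + (20 - d)*ξ₀₁ + (90 - 5*d)*ξ₁
        - 6*ξ₁₁ + (d - 30)*ξ₂ + 4*ξ₃)
    (hχ : χ_C = -60*d + ξ₀₀₁ + 10*ξ₀₁ + 55*ξ₁ - 4*ξ₁₁ - 20*ξ₂ + 3*ξ₃) :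
    ξ₃ = 125*d - 75*d^2 + 15*d^3 - d^4 + (150 - 45*d + 4*d^2 - 2*μ₀)*μ₀
      + 4*q - (1/2)*s_t + (45 - 4*d)*t + (-10 + (1/2)*d)*γ - χ_C := by
  subst hμ₀ ht hγ hq hst hχ; ring
end

section
/- For all rational numbers d, ξ₁, ξ₂, ξ₃, ξ₀₁, ξ₁₁, ξ₀₀₁, with μ₀ := (1/2)(−5d + d² + ξ₁), t := (1/3)(35d − (15/2)d² + (1/2)d³ − ξ₀₁ − 15ξ₁ + (3/2)dξ₁ + 2ξ₂), γ := 10d − ξ₀₁ − 5ξ₁ + ξ₂, q := (1/4)(−295d + (355/6)d² − 5d³ + (1/6)d⁴ + 2ξ₀₀₁ + (25 − (4/3)d)ξ₀₁ + (200 − 25d + d²)ξ₁ + (1/2)ξ₁² − 7ξ₁₁ + (−55 + (8/3)d)ξ₂ + 6ξ₃), and χ_C := −60d + ξ₀₀₁ + 10ξ₀₁ + 55ξ₁ − 4ξ₁₁ − 20ξ₂ + 3ξ₃, the identity ξ₁₁ = 50d − 35d² + 10d³ − d⁴ + (70 − 30d + 4d² − 2μ₀)μ₀ + 4q + (30 −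 4d)t − 5γ − 2χ_C holds. -/
/-- Table 4 (Theorem 4.1): the Chern number ξ₁₁ = ∫c₁(TM)c₂(TM) expressed via
the characters d, μ₀, t, q, γ, χ_C. -/
theorem stmt_13 (d ξ₁ ξ₂ ξ₃ ξ₀₁ ξ₁₁ ξ₀₀₁ μ₀ t γ q χ_C : ℚ)
    (hμ₀ : μ₀ = (1/2) * (-5*d + d^2 + ξ₁))
    (ht : t = (1/3) * (35*d - (15/2)*d^2 + (1/2)*d^3 - ξ₀₁ - 15*ξ₁
        + (3/2)*d*ξ₁ + 2*ξ₂))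
    (hγ : γ = 10*d - ξ₀₁ - 5*ξ₁ + ξ₂)
    (hq : q = (1/4) * (-295*d + (355/6)*d^2 - 5*d^3 + (1/6)*d^4 + 2*ξ₀₀₁
        + (25 - (4/3)*d)*ξ₀₁ + (200 - 25*d + d^2)*ξ₁ + (1/2)*ξ₁^2 - 7*ξ₁₁
        + (-55 + (8/3)*d)*ξ₂ + 6*ξ₃))
    (hχ : χ_C = -60*d + ξ₀₀₁ + 10*ξ₀₁ + 55*ξ₁ - 4*ξ₁₁ - 20*ξ₂ + 3*ξ₃) :
    ξ₁₁ = 50*d - 35*d^2 + 10*d^3 - d^4 + (70 - 30*d + 4*d^2 - 2*μ₀)*μ₀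
      + 4*q + (30 - 4*d)*t - 5*γ - 2*χ_C := by
  subst hμ₀ ht hγ hq hχ; ring
end

section
/- For all rational numbers d, ξ₁, ξ₂, ξ₃, ξ₀₁, ξ₁₁, ξ₀₀₁, with μ₀ := (1/2)(−5d + d² + ξ₁), t := (1/3)(35d − (15/2)d² + (1/2)d³ − ξ₀₁ − 15ξ₁ + (3/2)dξ₁ + 2ξ₂), γ := 10d − ξ₀₁ − 5ξ₁ + ξ₂, q := (1/4)(−295d + (355/6)d² − 5d³ + (1/6)d⁴ + 2ξ₀₀₁ + (25 − (4/3)d)ξ₀₁ + (200 − 25d + d²)ξ₁ + (1/2)ξ₁² − 7ξ₁₁ + (−55 + (8/3)d)ξ₂ + 6ξ₃), s_t := −120d + 10d² + 2ξ₀₀₁ + (20 − d)ξ₀₁ + (90 − 5d)ξ₁ − 6ξ₁₁ + (d − 30)ξ₂ + 4ξ₃, and χ_C := −60d + ξ₀₀₁ + 10ξ₀₁ + 55ξ₁ − 4ξ₁₁ − 20ξ₂ + 3ξ₃, the identity ξ₀₀₁ = 10d − 10d² + 5d³ − d⁴ + (20 − 15d + 4d² − 2μ₀)μ₀ + 4q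 + (3/2)s_t + (15 − 4d)t + (10 − (3/2)d)γ − 4χ_C holds. -/
/-- Table 4 (Theorem 4.1): the Chern number ξ₀₀₁ = ∫c₃(TM) expressed via the
seven characters d, μ₀, t, q, s_t, γ, χ_C. -/
theorem stmt_14 (d ξ₁ ξ₂ ξ₃ ξ₀₁ ξ₁₁ ξ₀₀₁ μ₀ t γ q s_t χ_C : ℚ)
    (hμ₀ : μ₀ = (1/2) * (-5*d + d^2 + ξ₁))
    (ht : t = (1/3) * (35*d - (15/2)*d^2 + (1/2)*d^3 - ξ₀₁ - 15*ξ₁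
        + (3/2)*d*ξ₁ + 2*ξ₂))
    (hγ : γ = 10*d - ξ₀₁ - 5*ξ₁ + ξ₂)
    (hq : q = (1/4) * (-295*d + (355/6)*d^2 - 5*d^3 + (1/6)*d^4 + 2*ξ₀₀₁
        + (25 - (4/3)*d)*ξ₀₁ + (200 - 25*d + d^2)*ξ₁ + (1/2)*ξ₁^2 - 7*ξ₁₁
        + (-55 + (8/3)*d)*ξ₂ + 6*ξ₃))
    (hst : s_t = -120*d + 10*d^2 + 2*ξ₀₀₁ + (20 - d)*ξ₀₁ + (90 - 5*d)*ξ₁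
        - 6*ξ₁₁ + (d - 30)*ξ₂ + 4*ξ₃)
    (hχ : χ_C = -60*d + ξ₀₀₁ + 10*ξ₀₁ + 55*ξ₁ - 4*ξ₁₁ - 20*ξ₂ + 3*ξ₃) :
    ξ₀₀₁ = 10*d - 10*d^2 + 5*d^3 - d^4 + (20 - 15*d + 4*d^2 - 2*μ₀)*μ₀
      + 4*q + (3/2)*s_t + (15 - 4*d)*t + (10 - (3/2)*d)*γ - 4*χ_C := by
  subst hμ₀ ht hγ hq hst hχ; ring
end

section
/- For all rational numbers d, ξ₁, ξ₂, ξ₃, ξ₀₁, ξ₁₁, ξ₀₀₁, with μ₀ := (1/2)(−5d + d² + ξ₁), t := (1/3)(35d − (15/2)d² + (1/2)d³ − ξ₀₁ − 15ξ₁ + (3/2)dξ₁ + 2ξ₂), γ := 10d − ξ₀₁ − 5ξ₁ + ξ₂, q := (1/4)(−295d + (355/6)d² − 5d³ + (1/6)d⁴ + 2ξ₀₀₁ + (25 − (4/3)d)ξ₀₁ + (200 − 25d + d²)ξ₁ + (1/2)ξ₁² − 7ξ₁₁ + (−55 + (8/3)d)ξ₂ + 6ξ₃), s_t := −120d + 10d²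 + 2ξ₀₀₁ + (20 − d)ξ₀₁ + (90 − 5d)ξ₁ − 6ξ₁₁ + (d − 30)ξ₂ + 4ξ₃, and χ_C := −60d + ξ₀₀₁ + 10ξ₀₁ + 55ξ₁ − 4ξ₁₁ − 20ξ₂ + 3ξ₃, the identity 4d − ξ₀₀₁ + 2ξ₀₁ − 3ξ₁ = d(d−1)³ + (−6 + 9d − 4d² + 2μ₀)μ₀ − 4q − (3/2)s_t + (4d − 9)t + ((3/2)d − 14)γ + 4χ_C holds; i.e., the class m₃ of the 3-fold, given by m₃ = 4d − ξ₀₀₁ + 2ξ₀₁ − 3ξ₁, equals the right-hand side. -/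
/-- Example 4.3: the class m₃ = 4d − ξ₀₀₁ + 2ξ₀₁ − 3ξ₁ of the 3-fold
expressed via the seven characters d, μ₀, t, q, s_t, γ, χ_C. -/
theorem stmt_17 (d ξ₁ ξ₂ ξ₃ ξ₀₁ ξ₁₁ ξ₀₀₁ μ₀ t γ q s_t χ_C : ℚ)
    (hμ₀ : μ₀ = (1/2) * (-5*d + d^2 + ξ₁))
    (ht : t = (1/3) * (35*d - (15/2)*d^2 + (1/2)*d^3 - ξ₀₁ - 15*ξ₁
        + (3/2)*d*ξ₁ + 2*ξ₂))
    (hγ : γ = 10*d - ξ₀₁ - 5*ξ₁ + ξ₂)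
    (hq : q = (1/4) * (-295*d + (355/6)*d^2 - 5*d^3 + (1/6)*d^4 + 2*ξ₀₀₁
        + (25 - (4/3)*d)*ξ₀₁ + (200 - 25*d + d^2)*ξ₁ + (1/2)*ξ₁^2 - 7*ξ₁₁
        + (-55 + (8/3)*d)*ξ₂ + 6*ξ₃))
    (hst : s_t = -120*d + 10*d^2 + 2*ξ₀₀₁ + (20 - d)*ξ₀₁ + (90 - 5*d)*ξ₁
        - 6*ξ₁₁ + (d - 30)*ξ₂ + 4*ξ₃)
    (hχ : χ_C = -60*d + ξ₀₀₁ + 10*ξ₀₁ + 55*ξ₁ - 4*ξ₁₁ - 20*ξ₂ + 3*ξ₃) :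
    4*d - ξ₀₀₁ + 2*ξ₀₁ - 3*ξ₁
      = d*(d - 1)^3 + (-6 + 9*d - 4*d^2 + 2*μ₀)*μ₀ - 4*q - (3/2)*s_t
        + (4*d - 9)*t + ((3/2)*d - 14)*γ + 4*χ_C := by
  subst hμ₀ ht hγ hq hst hχ; ring
end
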